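/- arXiv:2007.08303 — 4 statements merged into one kernel-verified Lean document; each statement's English description precedes it below -/
import Mathlib

section
/- Let n = 3t+1 and let each party i assign real-valued timestamps τ_i(r), τ_i(l) to two requests r and l, with at most t corrupt parties. Let τ₁ be the median of the n timestamps for r. Suppose (1) at least t+1 parties have τ_i(r) ≤ τ₁, (2) at most t parties have τ_i(l) < τ₁, and (3) there exists τ₂ with at least t+1 parties having τ_i(l) < τ₂ and at most t parties having τ_i(r) < τ₂. Then we reach a contradiction: conditions (1)–(3) cannot hold simultaneously. -/
open Finset

section ThresholdCounts

variable {ι α : Type*} [Fintype ι] [LinearOrder α]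

theorem monotone_card_filter_lt (g : ι → α) :
    Monotone fun b => (univ.filter fun i => g i < b).card := fun _ _ hab =>
  card_le_card <| monotone_filter_right _ fun _ _ hi => hi.trans_le hab

theorem card_filter_le_le_card_filter_lt (f : ι → α) {a b : α} (hab : a < b) :
    (univ.filter fun i => f i ≤ a).card ≤ (univ.filter fun i => f i < b).card :=
  card_le_card <| monotone_filter_right _ fun _ _ hi => hi.trans_lt hab

end ThresholdCounts

theorem clocked_wendy_safety_counting_general (t : ℕ)
    (τr τl : Fin (3 * t + 1) → ℝ) (τ₁ : ℝ)
    (h1 : t + 1 ≤ (univ.filter fun i => τr i ≤ τ₁).card)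
    (h2 : (univ.filter fun i => τl i < τ₁).card ≤ t)
    (h3 : ∃ τ₂ : ℝ, t + 1 ≤ (univ.filter fun i => τl i < τ₂).card ∧
      (univ.filter fun i => τr i < τ₂).card ≤ t) :
    False := by
  obtain ⟨τ₂, hl₂, hr₂⟩ := h3
  have hτ : τ₁ < τ₂ := (monotone_card_filter_lt τl).reflect_lt (by omega)
  have hr_count := card_filter_le_le_card_filter_lt τr hτ
  omega

/-- Core counting argument of Clocked-Wendy safety: conditions (1)-(3) on timestamps
around the median τ₁ of r's timestamps cannot hold simultaneously. -/
theorem clocked_wendy_safety_counting (t : ℕ)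
    (τr τl : Fin (3 * t + 1) → ℝ) (C : Finset (Fin (3 * t + 1)))
    (hC : C.card ≤ t) (τ₁ : ℝ)
    (h1 : t + 1 ≤ (univ.filter fun i => τr i ≤ τ₁).card)
    (h2 : (univ.filter fun i => τl i < τ₁).card ≤ t)
    (h3 : ∃ τ₂ : ℝ, t + 1 ≤ (univ.filter fun i => τl i < τ₂).card ∧
      (univ.filter fun i => τr i < τ₂).card ≤ t) :
    False :=
  clocked_wendy_safety_counting_general t τr τl τ₁ h1 h2 h3
end

section
/- Timed relative fairness is acyclic: if requests are each assigned, per honest party, a real arrival time, and we define r ≺ r' iff there exists a threshold τ such that every honest party's time for r is less than τ and every honest party's time for r' is at least τ, then ≺ is a strict partial order; in particular there is no cycle r_1 ≺ r_2 ≺ … ≺ r_k ≺ r_1. -/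
theorem Fin.not_rel_last_zero_of_chain {α : Type*} {r : α → α → Prop}
    (irrefl : ∀ x, ¬ r x x) (trans : ∀ {x y z}, r x y → r y z → r x z)
    {k : ℕ} (g : Fin (k + 1) → α) (hchain : ∀ i : Fin k, r (g i.castSucc) (g i.succ)) :
    ¬ r (g (Fin.last k)) (g 0) := by
  have reach : ∀ i : Fin (k + 1), g 0 = g i ∨ r (g 0) (g i) := by
    intro i
    induction i using Fin.induction with
    | zero => exact .inl rfl
    | succ j ih =>
      rcases ih with heq | h
      · exact .inr (heq ▸ hchain j)
      · exact .inr (trans h (hchain j))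
  intro hback
  rcases reach (Fin.last k) with heq | h
  · exact irrefl _ (heq ▸ hback)
  · exact irrefl _ (trans h hback)

section TimedPrecedes

variable {ι R α : Type*} [Preorder α] {H : Finset ι} {a : ι → R → α} {r₁ r₂ r₃ : R}

/-- The timed fairness relation `r ≺ r'`. -/
def TimedPrecedes (H : Finset ι) (a : ι → R → α) (r r' : R) : Prop :=
  ∃ τ : α, (∀ h ∈ H, a h r < τ) ∧ (∀ h ∈ H, τ ≤ a h r')

theorem TimedPrecedes.lt_of_mem (hr : TimedPrecedes H a r₁ r₂) {h : ι} (hh : h ∈ H) :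
    a h r₁ < a h r₂ :=
  let ⟨_, hbefore, hafter⟩ := hr
  (hbefore h hh).trans_le (hafter h hh)

theorem TimedPrecedes.irrefl (hH : H.Nonempty) (r : R) : ¬ TimedPrecedes H a r r := fun hr =>
  let ⟨_, hh⟩ := hH
  (hr.lt_of_mem hh).false

theorem TimedPrecedes.trans (h₁₂ : TimedPrecedes H a r₁ r₂) (h₂₃ : TimedPrecedes H a r₂ r₃) :
    TimedPrecedes H a r₁ r₃ :=
  let ⟨τ, hbefore, hafter⟩ := h₂₃
  ⟨τ, fun h hh => (h₁₂.lt_of_mem hh).trans (hbefore h hh), hafter⟩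

end TimedPrecedes

/-- Timed relative fairness is a strict partial order (irreflexive and transitive),
hence admits no cycles. -/
theorem timed_fairness_strict_partial_order (ι R : Type*)
    (H : Finset ι) (hH : H.Nonempty) (a : ι → R → ℝ) :
    (∀ r : R, ¬ ∃ τ : ℝ, (∀ h ∈ H, a h r < τ) ∧ (∀ h ∈ H, τ ≤ a h r)) ∧
    (∀ r₁ r₂ r₃ : R,
      (∃ τ : ℝ, (∀ h ∈ H, a h r₁ < τ) ∧ (∀ h ∈ H, τ ≤ a h r₂)) →
      (∃ τ : ℝ, (∀ h ∈ H, a h r₂ < τ) ∧ (∀ h ∈ H, τ ≤ a h r₃)) →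
      (∃ τ : ℝ, (∀ h ∈ H, a h r₁ < τ) ∧ (∀ h ∈ H, τ ≤ a h r₃))) ∧
    (∀ (k : ℕ) (g : Fin (k + 1) → R),
      ¬ ((∀ i : Fin k,
            ∃ τ : ℝ, (∀ h ∈ H, a h (g i.castSucc) < τ) ∧
              (∀ h ∈ H, τ ≤ a h (g i.succ))) ∧
         (∃ τ : ℝ, (∀ h ∈ H, a h (g (Fin.last k)) < τ) ∧
            (∀ h ∈ H, τ ≤ a h (g 0))))) :=
  have irrefl : ∀ r, ¬ TimedPrecedes H a r r := TimedPrecedes.irrefl hH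
  have trans : ∀ {r₁ r₂ r₃}, TimedPrecedes H a r₁ r₂ → TimedPrecedes H a r₂ r₃ →
      TimedPrecedes H a r₁ r₃ := TimedPrecedes.trans
  ⟨irrefl, fun _ _ _ => trans,
    fun _ g ⟨hchain, hback⟩ => Fin.not_rel_last_zero_of_chain irrefl trans g hchain hback⟩
end

section
/- Let n = 3t+1 and let m be the median of a multiset of n−t real timestamps for request r. If at least t+1 of the n parties gave request r' a timestamp smaller than m, and at most t parties are corrupt, then at least one honest party timestamped r' before the honest median position of r's timestamps; conversely, if at most t parties gave r' a timestamp smaller than m, then it is impossible that all honest parties saw r' before all honest parties saw r relative to a common threshold τ ≤ m. -/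
/-!
Both claims are pigeonhole arguments against the at most `t` corrupt parties: `t + 1` parties
cannot all be corrupt. For the second claim, an honest party with `τr i ≤ m` forces `τ ≤ m`, so
all `2t + 1` honest parties would timestamp `r'` below `m`, more than the `t` allowed.
-/

open Finset

section Pigeonhole

variable {ι : Type*} [Fintype ι] {p : ι → Prop} [DecidablePred p] {C : Finset ι}

theorem exists_notMem_of_card_lt_card_filter (h : #C < #{i | p i}) : ∃ i, i ∉ C ∧ p i := by
  obtain ⟨i, hi, hiC⟩ := exists_mem_notMem_of_card_lt_card h
  exact ⟨i, hiC, (mem_filter.mp hi).2⟩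

theorem card_sub_card_le_card_filter_of_forall_notMem [DecidableEq ι] (h : ∀ i, i ∉ C → p i) :
    Fintype.card ι - #C ≤ #{i | p i} := by
  rw [← card_compl]
  exact card_le_card fun i hi => mem_filter.mpr ⟨mem_univ i, h i (mem_compl.mp hi)⟩

end Pigeonhole

/-- Clocked-Wendy leader rule around the median m of r's timestamps: if ≥ t+1 parties
timestamp r' below m, some honest party did; if ≤ t parties timestamp r' below m, there
is no threshold τ with all honest parties seeing r' before τ and r at or after τ. -/
theorem clocked_wendy_median_rule (t : ℕ)
    (τr τr' : Fin (3 * t + 1) → ℝ) (C : Finset (Fin (3 * t + 1)))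
    (hC : C.card ≤ t) (m : ℝ)
    (hm : t + 1 ≤ (univ.filter fun i => τr i ≤ m).card) :
    (t + 1 ≤ (univ.filter fun i => τr' i < m).card →
        ∃ i, i ∉ C ∧ τr' i < m) ∧
    ((univ.filter fun i => τr' i < m).card ≤ t →
        ¬ ∃ τ : ℝ, (∀ i, i ∉ C → τr' i < τ) ∧ (∀ i, i ∉ C → τ ≤ τr i)) := by
  refine ⟨fun h => exists_notMem_of_card_lt_card_filter (by omega), ?_⟩
  rintro h ⟨τ, hr'_before, hr_after⟩
  obtain ⟨i, hiC, hi⟩ :=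
    exists_notMem_of_card_lt_card_filter (p := fun i => τr i ≤ m) (C := C) (by omega)
  have hτm : τ ≤ m := (hr_after i hiC).trans hi
  have hhonest := card_sub_card_le_card_filter_of_forall_notMem (p := fun i => τr' i < m)
    fun j hj => (hr'_before j hj).trans_le hτm
  rw [Fintype.card_fin] at hhonest
  omega
end

section
/- Suppose blocks are produced so that (a) undelivered requests are carried to the next instance preserving order, (b) each terminating instance delivers a nonempty block, and (c) for each request r seen by all honest parties, the set of requests that relative fairness permits to be scheduled in a strictly earlier block than r is finite, of size K_r. Then r is delivered in one of the first K_r + 1 blocks. -/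
open Finset

theorem Finset.card_le_card_of_pairwiseDisjoint_of_nonempty {ι α : Type*} [DecidableEq α]
    {s : Finset ι} {f : ι → Finset α} {t : Finset α} (hs : (s : Set ι).PairwiseDisjoint f)
    (hf : ∀ i ∈ s, (f i).Nonempty) (ht : ∀ i ∈ s, f i ⊆ t) : #s ≤ #t :=
  (card_le_card_biUnion hs hf).trans (card_le_card (biUnion_subset.2 ht))

theorem fairness_implies_bounded_delivery_general (R : Type*) [DecidableEq R]
    (B : ℕ → Finset R)
    (hne : ∀ i, (B i).Nonempty)
    (hdisj : ∀ i j, i ≠ j → Disjoint (B i) (B j))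
    (N : ℕ)
    (S : Finset R) (hS : ∀ i < N, ∀ x ∈ B i, x ∈ S) :
    N < S.card + 1 := by
  have hN : #(range N) ≤ #S :=
    card_le_card_of_pairwiseDisjoint_of_nonempty (fun i _ j _ hij ↦ hdisj i j hij)
      (fun i _ ↦ hne i) (fun i hi x hx ↦ hS i (mem_range.1 hi) x hx)
  exact Nat.lt_add_one_of_le (card_range N ▸ hN)

/-- If blocks are nonempty and pairwise disjoint, and every block delivered strictly
before the block containing r consists only of requests from a finite set S of size
K_r, then r is delivered in one of the first K_r + 1 blocks. -/
theorem fairness_implies_bounded_delivery (R : Type*) [DecidableEq R]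
    (B : ℕ → Finset R)
    (hne : ∀ i, (B i).Nonempty)
    (hdisj : ∀ i j, i ≠ j → Disjoint (B i) (B j))
    (r : R) (N : ℕ) (hr : r ∈ B N)
    (S : Finset R) (hS : ∀ i < N, ∀ x ∈ B i, x ∈ S) :
    N < S.card + 1 :=
  fairness_implies_bounded_delivery_general R B hne hdisj N S hS
end
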